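/- Let x_1, …, x_n ∈ ℝ^d be unit vectors, let b : ℕ → ℝ satisfy b_0 ≥ 1, b_k ≥ 1/k² for all k ≥ 1, and Σ_{k=0}^∞ b_k < ∞, and suppose the matrix H with H_{ab} = Σ_k b_k (x_a·x_b)^k is positive definite. Let g(t) = Σ_{k=0}^∞ a_k t^k be a power series with radius of convergence R_g, let β ∈ ℝ^d with β := ‖β‖ < R_g, and define y ∈ ℝⁿ by y_a = g(β · x_a). Then √(yᵀ H⁻¹ y) ≤ β g̃′(β) + g̃(0), where g̃(t) = Σ_{k=0}^∞ |a_k| t^k is the auxiliary function of g (so β g̃′(β) + g̃(0) = Σ_{k≥1} k|a_k|β^k + |a_0|, a convergent series since β < R_g). -/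

import Mathlib

open Matrix
open scoped RealInnerProductSpace

/-!
Put `u = H⁻¹ y` and `s = yᵀ H⁻¹ y = uᵀ H u`. Since `⟪v, w⟫ ^ k = ⟪v^{⊗k}, w^{⊗k}⟫`, the kernel
expansion gives `s = ∑ₖ bₖ ‖Fₖ‖²` with `Fₖ = ∑ₐ uₐ xₐ^{⊗k}`, so the lower bound on `bₖ` yields
`‖Fₖ‖ ≤ max k 1 · √s`. Expanding `g` instead, `s = yᵀ u = ∑ₖ aₖ ⟪β^{⊗k}, Fₖ⟫`, and Cauchy–Schwarz
bounds the `k`-th term by `|aₖ| ‖β‖ᵏ max k 1 · √s`. Hence `s ≤ √s · ∑ₖ max k 1 |aₖ| ‖β‖ᵏ`, and the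
last sum is `β g̃′(β) + g̃(0)`.
-/

section TensorPower

variable {ι : Type*} [Fintype ι]

/-- The coordinates of `v ⊗ ⋯ ⊗ v` (`k` factors): a feature map of the kernel `⟪v, w⟫ ^ k`. -/
noncomputable def EuclideanSpace.tensorPower (k : ℕ) (v : EuclideanSpace ℝ ι) :
    EuclideanSpace ℝ (Fin k → ι) :=
  WithLp.toLp 2 fun g => ∏ i, v (g i)

namespace EuclideanSpace

theorem inner_tensorPower (k : ℕ) (v w : EuclideanSpace ℝ ι) :
    ⟪tensorPower k v, tensorPower k w⟫ = ⟪v, w⟫ ^ k := by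
  simp only [tensorPower, PiLp.inner_apply, RCLike.inner_apply, conj_trivial,
    ← Finset.prod_mul_distrib]
  rw [Finset.sum_pow', Fintype.piFinset_univ]

theorem norm_tensorPower (k : ℕ) (v : EuclideanSpace ℝ ι) : ‖tensorPower k v‖ = ‖v‖ ^ k := by
  rw [← sq_eq_sq₀ (norm_nonneg _) (by positivity), ← real_inner_self_eq_norm_sq,
    inner_tensorPower, real_inner_self_eq_norm_sq, ← pow_mul, ← pow_mul, mul_comm]

end EuclideanSpace

end TensorPower

theorem Matrix.mulVec_gram_dotProduct_self {n E : Type*} [Fintype n] [NormedAddCommGroup E]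
    [InnerProductSpace ℝ E] (v : n → E) (u : n → ℝ) :
    gram ℝ v *ᵥ u ⬝ᵥ u = ‖∑ i, u i • v i‖ ^ 2 := by
  rw [dotProduct_comm, ← star_trivial u, star_dotProduct_gram_mulVec, star_trivial,
    real_inner_self_eq_norm_sq]

section HasSum

variable {m n α : Type*} [Fintype m] [NonUnitalNonAssocSemiring α] [TopologicalSpace α]
  [IsTopologicalSemiring α]

theorem Matrix.hasSum_dotProduct {f : ℕ → m → α} {v : m → α}
    (h : ∀ i, HasSum (fun k => f k i) (v i)) (w : m → α) : HasSum (fun k => f k ⬝ᵥ w) (v ⬝ᵥ w) :=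
  hasSum_sum fun i _ => (h i).mul_right (w i)

theorem Matrix.hasSum_mulVec_dotProduct [Fintype n] {K : ℕ → Matrix n m α} {H : Matrix n m α}
    (h : ∀ i j, HasSum (fun k => K k i j) (H i j)) (u : m → α) (w : n → α) :
    HasSum (fun k => K k *ᵥ u ⬝ᵥ w) (H *ᵥ u ⬝ᵥ w) :=
  hasSum_dotProduct (fun i => hasSum_dotProduct (h i) u) w

end HasSum

theorem summable_mul_pow_of_abs_le {a : ℕ → ℝ} {r t : ℝ} (ha : Summable fun k => |a k| * r ^ k)
    (ht : |t| ≤ r) : Summable fun k => a k * t ^ k :=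
  ha.of_norm_bounded fun k => by
    rw [Real.norm_eq_abs, abs_mul, abs_pow]
    exact mul_le_mul_of_nonneg_left (pow_le_pow_left₀ (abs_nonneg t) ht k) (abs_nonneg _)

theorem summable_natCast_mul_abs_mul_pow {a : ℕ → ℝ} {r t : ℝ}
    (ha : Summable fun k => |a k| * r ^ k) (ht₀ : 0 ≤ t) (htr : t < r) :
    Summable fun k : ℕ => (k : ℝ) * |a k| * t ^ k := by
  have hr : 0 < r := ht₀.trans_lt htr
  have hq : ‖t / r‖ < 1 := by
    rw [Real.norm_of_nonneg (div_nonneg ht₀ hr.le), div_lt_one hr]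
    exact htr
  have hgeom : Summable fun k : ℕ => (k : ℝ) * (t / r) ^ k := by
    simpa using summable_pow_mul_geometric_of_norm_lt_one 1 hq
  obtain ⟨C, hC⟩ := hgeom.tendsto_cofinite_zero.bddAbove_range_of_cofinite
  refine .of_nonneg_of_le (fun k => by positivity) (fun k => ?_) (ha.mul_left C)
  calc (k : ℝ) * |a k| * t ^ k = (k * (t / r) ^ k) * (|a k| * r ^ k) := by
        rw [div_pow]; field_simp
    _ ≤ C * (|a k| * r ^ k) := by gcongr; exact hC ⟨k, rfl⟩

theorem hasSum_max_one_mul {f : ℕ → ℝ} {S : ℝ} (h : HasSum (fun k : ℕ => (k : ℝ) * f k) S) :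
    HasSum (fun k : ℕ => max (k : ℝ) 1 * f k) (S + f 0) := by
  rw [← hasSum_nat_add_iff' 1] at h ⊢
  convert h using 1
  · funext k
    push_cast
    rw [max_eq_left (by linarith [k.cast_nonneg (α := ℝ)])]
  · simp

theorem sqrt_le_of_hasSum_of_abs_le {a b w ρ N P : ℕ → ℝ} {s M : ℝ}
    (hN : ∀ k, 0 ≤ N k) (hw : ∀ k, 0 ≤ w k) (hρ : ∀ k, 0 ≤ ρ k) (hbw : ∀ k, 1 ≤ w k ^ 2 * b k)
    (hbN : HasSum (fun k => b k * N k ^ 2) s) (haP : HasSum (fun k => a k * P k) s)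
    (hP : ∀ k, |P k| ≤ ρ k * N k) (hM : HasSum (fun k => w k * |a k| * ρ k) M) :
    √s ≤ M := by
  have hb : ∀ k, 0 ≤ b k := fun k =>
    (pos_of_mul_pos_right (one_pos.trans_le (hbw k)) (sq_nonneg _)).le
  have hs : 0 ≤ s := hbN.nonneg fun k => by have := hb k; positivity
  have hNs : ∀ k, N k ≤ w k * √s := fun k => by
    have hbNs : b k * N k ^ 2 ≤ s := le_hasSum hbN k fun j _ => by have := hb j; positivity
    rw [← Real.sqrt_sq (hN k), ← Real.sqrt_sq (hw k), ← Real.sqrt_mul (sq_nonneg _)]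
    refine Real.sqrt_le_sqrt ?_
    nlinarith [hbw k, sq_nonneg (N k), sq_nonneg (w k)]
  have hterm : ∀ k, a k * P k ≤ w k * |a k| * ρ k * √s := fun k =>
    calc a k * P k ≤ |a k| * |P k| := (le_abs_self _).trans (abs_mul _ _).le
      _ ≤ |a k| * (ρ k * (w k * √s)) := by
          gcongr
          exact (hP k).trans (by gcongr; exacts [hρ k, hNs k])
      _ = w k * |a k| * ρ k * √s := by ring
  have hsM : √s * √s ≤ M * √s := by
    rw [Real.mul_self_sqrt hs]
    exact hasSum_le hterm haP (hM.mul_right _)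
  rcases (Real.sqrt_nonneg s).eq_or_lt with h0 | hpos
  · rw [← h0]
    exact hM.nonneg fun k => by have := hw k; have := hρ k; positivity
  · exact le_of_mul_le_mul_right hsM hpos

section Kernel

open EuclideanSpace

variable {n d : Type*} [Fintype n] [Fintype d]

theorem hasSum_mul_norm_sum_smul_tensorPower_sq {x : n → EuclideanSpace ℝ d} {b : ℕ → ℝ}
    {H : Matrix n n ℝ} (hH : ∀ i j, HasSum (fun k => b k * ⟪x i, x j⟫ ^ k) (H i j)) (u : n → ℝ) :
    HasSum (fun k => b k * ‖∑ i, u i • tensorPower k (x i)‖ ^ 2) (H *ᵥ u ⬝ᵥ u) := by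
  have := hasSum_mulVec_dotProduct (H := H)
    (K := fun k => b k • gram ℝ fun i => tensorPower k (x i))
    (by simpa only [Matrix.smul_apply, gram_apply, inner_tensorPower, smul_eq_mul] using hH) u u
  simpa only [smul_mulVec, smul_dotProduct, mulVec_gram_dotProduct_self, smul_eq_mul] using this

theorem abs_dotProduct_inner_pow_le (β : EuclideanSpace ℝ d) (x : n → EuclideanSpace ℝ d)
    (u : n → ℝ) (k : ℕ) :
    |(fun i => ⟪β, x i⟫ ^ k) ⬝ᵥ u| ≤ ‖β‖ ^ k * ‖∑ i, u i • tensorPower k (x i)‖ := by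
  have : (fun i => ⟪β, x i⟫ ^ k) ⬝ᵥ u = ⟪tensorPower k β, ∑ i, u i • tensorPower k (x i)⟫ := by
    simp only [dotProduct, inner_sum, inner_smul_right, inner_tensorPower, mul_comm]
  rw [this, ← norm_tensorPower]
  exact abs_real_inner_le_norm _ _

end Kernel

theorem one_le_max_one_sq_mul {b : ℕ → ℝ} (hb0 : 1 ≤ b 0)
    (hbk : ∀ k : ℕ, 1 ≤ k → 1 / (k : ℝ) ^ 2 ≤ b k) (k : ℕ) : 1 ≤ max (k : ℝ) 1 ^ 2 * b k := by
  rcases Nat.eq_zero_or_pos k with rfl | hk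
  · simpa using hb0
  · have hk' : (1 : ℝ) ≤ k := by exact_mod_cast hk
    rw [max_eq_left hk', ← div_le_iff₀' (by positivity)]
    exact hbk k hk

/-- **Learning univariate analytic functions (Theorem 1a, kernel-norm form).**
For unit-norm data and a slowly decaying power-series kernel
(`b 0 ≥ 1`, `b k ≥ 1/k²` for `k ≥ 1`, `∑ b k < ∞`) with positive definite Gram
matrix `H`: if `g(t) = ∑ aₖ tᵏ` has radius of convergence exceeding `‖β‖`
(expressed as: the auxiliary series `∑ |aₖ| rᵏ` converges for some `r > ‖β‖`)
and `y_c = g(⟪β, x_c⟫)`, then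
`√(yᵀ H⁻¹ y) ≤ β g̃′(β) + g̃(0) = ∑' k, k |aₖ| ‖β‖ᵏ + |a₀|`. -/
theorem stmt5 (n d : ℕ) (x : Fin n → EuclideanSpace ℝ (Fin d))
    (hx : ∀ a, ‖x a‖ = 1)
    (b : ℕ → ℝ) (hb0 : 1 ≤ b 0) (hbk : ∀ k : ℕ, 1 ≤ k → 1 / (k : ℝ) ^ 2 ≤ b k)
    (hb_sum : Summable b)
    (H : Matrix (Fin n) (Fin n) ℝ)
    (hH : ∀ a c, H a c = ∑' k : ℕ, b k * ⟪x a, x c⟫ ^ k)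
    (hHpd : H.PosDef)
    (a : ℕ → ℝ) (β : EuclideanSpace ℝ (Fin d))
    (hR : ∃ r : ℝ, ‖β‖ < r ∧ Summable (fun k : ℕ => |a k| * r ^ k))
    (y : Fin n → ℝ) (hy : ∀ c, y c = ∑' k : ℕ, a k * ⟪β, x c⟫ ^ k) :
    Real.sqrt (y ⬝ᵥ (H⁻¹ *ᵥ y)) ≤
      (∑' k : ℕ, (k : ℝ) * |a k| * ‖β‖ ^ k) + |a 0| := by
  obtain ⟨r, hβr, ha⟩ := hR
  have hbw := one_le_max_one_sq_mul hb0 hbk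
  have hb_abs : ∀ k, |b k| = b k := fun k =>
    abs_of_pos (pos_of_mul_pos_right (one_pos.trans_le (hbw k)) (sq_nonneg _))
  set u := H⁻¹ *ᵥ y
  have hyu : y = H *ᵥ u := by
    rw [mulVec_mulVec, mul_nonsing_inv _ ((isUnit_iff_isUnit_det H).mp hHpd.isUnit), one_mulVec]
  have hHsum : ∀ i j, HasSum (fun k => b k * ⟪x i, x j⟫ ^ k) (H i j) := fun i j => by
    rw [hH]
    refine (summable_mul_pow_of_abs_le (r := 1) (by simpa [hb_abs] using hb_sum) ?_).hasSum
    simpa [hx] using abs_real_inner_le_norm (x i) (x j)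
  have hysum : ∀ c, HasSum (fun k => (a k • fun i => ⟪β, x i⟫ ^ k) c) (y c) := fun c => by
    rw [hy]
    refine (summable_mul_pow_of_abs_le ha ?_).hasSum
    exact (abs_real_inner_le_norm β (x c)).trans (by rw [hx, mul_one]; exact hβr.le)
  refine sqrt_le_of_hasSum_of_abs_le (a := a) (fun k => norm_nonneg _) (fun k => by positivity)
    (fun k => by positivity) hbw
    (by rw [hyu]; exact hasSum_mul_norm_sum_smul_tensorPower_sq hHsum u) ?_
    (abs_dotProduct_inner_pow_le β x u) ?_
  · simpa only [smul_dotProduct, smul_eq_mul] using hasSum_dotProduct hysum u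
  · have := (summable_natCast_mul_abs_mul_pow ha (norm_nonneg β) hβr).hasSum
    simpa only [mul_assoc, pow_zero, mul_one] using
      hasSum_max_one_mul (f := fun k => |a k| * ‖β‖ ^ k) (by simpa only [mul_assoc] using this)
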